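/- arXiv:1308.4835 — 2 statements merged into one kernel-verified Lean document; each statement's English description precedes it below -/
import Mathlib

section
/- Fix ξ ≠ 0 in (1/λ)ℤ, τ ∈ ℝ, M > 1, λ ≥ 1. The set A_{ξ,τ} = {ξ₁ ∈ (1/λ)ℤ : |ξ₁² − (ξ−ξ₁)²| ≥ M and |τ − ξ₁³ − (ξ−ξ₁)³| ≤ 1} is contained in the union of two intervals each of length ≤ C/M, and hence its cardinality satisfies #A_{ξ,τ} ≤ C(λ/M + 1). -/
private lemma diam_aux (ξ τ M x y : ℝ) (hM : 0 < M) (hξ : ξ ≠ 0)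
    (hx1 : M ≤ |x ^ 2 - (ξ - x) ^ 2|) (hx2 : |τ - x ^ 3 - (ξ - x) ^ 3| ≤ 1)
    (hy1 : M ≤ |y ^ 2 - (ξ - y) ^ 2|) (hy2 : |τ - y ^ 3 - (ξ - y) ^ 3| ≤ 1)
    (hx : ξ / 2 ≤ x) (hy : ξ / 2 ≤ y) : |x - y| ≤ 1 / M := by
  have hr : 0 < |ξ| := abs_pos.2 hξ
  set r := |ξ| with hrdef
  set u := x - ξ / 2 with hudef
  set v := y - ξ / 2 with hvdef
  have hu0 : 0 ≤ u := by simp [hudef]; linarith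
  have hv0 : 0 ≤ v := by simp [hvdef]; linarith
  have h1 : M ≤ 2 * r * u := by
    have e : x ^ 2 - (ξ - x) ^ 2 = ξ * (2 * u) := by rw [hudef]; ring
    rw [e, abs_mul, abs_of_nonneg (by linarith : (0:ℝ) ≤ 2 * u)] at hx1
    nlinarith [hx1]
  have h2 : M ≤ 2 * r * v := by
    have e : y ^ 2 - (ξ - y) ^ 2 = ξ * (2 * v) := by rw [hvdef]; ring
    rw [e, abs_mul, abs_of_nonneg (by linarith : (0:ℝ) ≤ 2 * v)] at hy1
    nlinarith [hy1]
  have key : |3 * ξ * (u ^ 2 - v ^ 2)| ≤ 2 := by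
    have e : 3 * ξ * (u ^ 2 - v ^ 2)
        = (τ - y ^ 3 - (ξ - y) ^ 3) - (τ - x ^ 3 - (ξ - x) ^ 3) := by
      rw [hudef, hvdef]; ring
    obtain ⟨ha, hb⟩ := abs_le.1 hx2
    obtain ⟨hc, hd⟩ := abs_le.1 hy2
    rw [e]
    rw [abs_le]; constructor <;> linarith
  have key' : 3 * r * |u ^ 2 - v ^ 2| ≤ 2 := by
    have : |3 * ξ * (u ^ 2 - v ^ 2)| = 3 * r * |u ^ 2 - v ^ 2| := by
      rw [abs_mul, abs_mul]; simp [hrdef]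
    linarith [this ▸ key]
  have h4 : M ≤ r * (u + v) := by nlinarith
  have hxy : x - y = u - v := by rw [hudef, hvdef]; ring
  rw [hxy, abs_le]
  clear hx1 hx2 hy1 hy2 hx hy hxy key hudef hvdef hrdef hξ
  clear_value r u v
  clear x y ξ τ
  have hM1 : 0 < 1 / M := by positivity
  constructor
  · -- -(1/M) ≤ u - v, i.e. v - u ≤ 1/M
    rcases le_or_gt v u with h | h
    · linarith
    · have hvu : 0 ≤ v - u := by linarith
      have hnn : (0:ℝ) ≤ (v - u) * (u + v) := mul_nonneg (by linarith) (by linarith)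
      have habs : |u ^ 2 - v ^ 2| = (v - u) * (u + v) := by
        rw [abs_sub_comm, abs_of_nonneg (by linarith [hnn])]; ring
      rw [habs] at key'
      have := mul_le_mul_of_nonneg_left h4 hvu
      have hMuv : M * (v - u) ≤ 1 := by nlinarith [this, key']
      have hle : v - u ≤ 1 / M := (le_div_iff₀ hM).2 (by linarith)
      linarith
  · rcases le_or_gt u v with h | h
    · linarith
    · have huv : 0 ≤ u - v := by linarith
      have hnn : (0:ℝ) ≤ (u - v) * (u + v) := mul_nonneg (by linarith) (by linarith)
      have habs : |u ^ 2 - v ^ 2| = (u - v) * (u + v) := by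
        rw [abs_of_nonneg (by linarith [hnn])]; ring
      rw [habs] at key'
      have := mul_le_mul_of_nonneg_left h4 huv
      have hMuv : M * (u - v) ≤ 1 := by nlinarith [this, key']
      exact (le_div_iff₀ hM).2 (by linarith)

private lemma interval_of_diam (S : Set ℝ) (ℓ : ℝ) (hℓ : 0 ≤ ℓ)
    (h : ∀ x ∈ S, ∀ y ∈ S, |x - y| ≤ ℓ) : ∃ a, S ⊆ Set.Icc a (a + ℓ) := by
  rcases S.eq_empty_or_nonempty with h0 | ⟨x₀, hx₀⟩
  · exact ⟨0, by simp [h0]⟩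
  · have hbdd : BddBelow S := ⟨x₀ - ℓ, fun y hy => by
      have := (abs_le.1 (h x₀ hx₀ y hy)).2; linarith⟩
    refine ⟨sInf S, fun x hx => ⟨csInf_le hbdd hx, ?_⟩⟩
    have : x - ℓ ≤ sInf S := le_csInf ⟨x₀, hx₀⟩ (fun y hy => by
      have := (abs_le.1 (h x hx y hy)).2; linarith)
    linarith

private lemma count_lemma (lam a ℓ : ℝ) (hlam : 0 < lam) (hℓ : 0 ≤ ℓ) (S : Set ℝ)
    (hlat : ∀ x ∈ S, ∃ n : ℤ, x = (n : ℝ) / lam) (hsub : S ⊆ Set.Icc a (a + ℓ)) :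
    S.Finite ∧ (S.ncard : ℝ) ≤ lam * ℓ + 1 := by
  set T : Set ℤ := Set.Icc ⌈lam * a⌉ ⌊lam * (a + ℓ)⌋ with hT
  have hTfin : T.Finite := Set.finite_Icc _ _
  have hmaps : ∀ x ∈ S, ⌊lam * x⌋ ∈ T := by
    intro x hx
    obtain ⟨n, rfl⟩ := hlat x hx
    have he : lam * ((n : ℝ) / lam) = (n : ℝ) := by field_simp
    have hxa := (hsub hx).1
    have hxb := (hsub hx).2
    rw [he, Int.floor_intCast, hT]
    refine ⟨Int.ceil_le.2 ?_, Int.le_floor.2 ?_⟩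
    · rw [← he]; exact mul_le_mul_of_nonneg_left hxa hlam.le
    · rw [← he]; exact mul_le_mul_of_nonneg_left hxb hlam.le
  have hinj : Set.InjOn (fun x => ⌊lam * x⌋) S := by
    intro x hx y hy hxy
    obtain ⟨n, rfl⟩ := hlat x hx
    obtain ⟨m, rfl⟩ := hlat y hy
    have hen : lam * ((n : ℝ) / lam) = (n : ℝ) := by field_simp
    have hem : lam * ((m : ℝ) / lam) = (m : ℝ) := by field_simp
    simp only [hen, hem, Int.floor_intCast] at hxy
    rw [hxy]
  have hSfin : S.Finite :=
    Set.Finite.of_finite_image (hTfin.subset (Set.image_subset_iff.2 hmaps)) hinj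
  refine ⟨hSfin, ?_⟩
  have hcard : S.ncard ≤ T.ncard := Set.ncard_le_ncard_of_injOn _ hmaps hinj hTfin
  have hTcard : T.ncard = (⌊lam * (a + ℓ)⌋ + 1 - ⌈lam * a⌉).toNat := by
    rw [hT, show (Set.Icc ⌈lam * a⌉ ⌊lam * (a + ℓ)⌋ : Set ℤ)
        = ↑(Finset.Icc ⌈lam * a⌉ ⌊lam * (a + ℓ)⌋) from (Finset.coe_Icc _ _).symm,
      Set.ncard_coe_finset, Int.card_Icc]
  have h1 : lam * a ≤ (⌈lam * a⌉ : ℝ) := Int.le_ceil _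
  have h2 : ((⌊lam * (a + ℓ)⌋ : ℤ) : ℝ) ≤ lam * (a + ℓ) := Int.floor_le _
  calc (S.ncard : ℝ) ≤ (T.ncard : ℝ) := by exact_mod_cast hcard
    _ ≤ lam * ℓ + 1 := by
        rw [hTcard]
        rcases le_or_gt (⌊lam * (a + ℓ)⌋ + 1 - ⌈lam * a⌉) 0 with h | h
        · rw [Int.toNat_of_nonpos h]
          simp
          nlinarith
        · have h3 : (((⌊lam * (a + ℓ)⌋ + 1 - ⌈lam * a⌉).toNat : ℤ) : ℝ)
              = ((⌊lam * (a + ℓ)⌋ + 1 - ⌈lam * a⌉ : ℤ) : ℝ) := by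
            exact_mod_cast congrArg (fun z : ℤ => (z : ℝ)) (Int.toNat_of_nonneg h.le)
          calc ((⌊lam * (a + ℓ)⌋ + 1 - ⌈lam * a⌉).toNat : ℝ)
              = (((⌊lam * (a + ℓ)⌋ + 1 - ⌈lam * a⌉).toNat : ℤ) : ℝ) := by push_cast; ring
            _ = ((⌊lam * (a + ℓ)⌋ + 1 - ⌈lam * a⌉ : ℤ) : ℝ) := h3
            _ ≤ lam * ℓ + 1 := by push_cast; linarith

/-- Counting lemma behind the periodic bilinear Strichartz estimate: the resonant set
`A_{ξ,τ} ⊆ (1/λ)ℤ` is contained in two intervals of length `≤ C/M`, hence has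
cardinality `≤ C(λ/M + 1)`. -/
theorem stmt4 :
    ∃ C : ℝ, 0 < C ∧
      ∀ lam ξ τ M : ℝ, 1 ≤ lam → 1 < M → ξ ≠ 0 →
        (∃ n : ℤ, ξ = (n : ℝ) / lam) →
        ∀ A : Set ℝ,
          A = {ξ₁ : ℝ | (∃ n : ℤ, ξ₁ = (n : ℝ) / lam) ∧
                M ≤ |ξ₁ ^ 2 - (ξ - ξ₁) ^ 2| ∧
                |τ - ξ₁ ^ 3 - (ξ - ξ₁) ^ 3| ≤ 1} →
          (∃ a b : ℝ, A ⊆ Set.Icc a (a + C / M) ∪ Set.Icc b (b + C / M)) ∧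
            A.Finite ∧ (A.ncard : ℝ) ≤ C * (lam / M + 1) := by
  refine ⟨2, by norm_num, ?_⟩
  intro lam ξ τ M hlam hM hξ hξlat A hA
  have hM0 : 0 < M := by linarith
  have hlam0 : 0 < lam := by linarith
  have hℓ : (0:ℝ) ≤ 1 / M := by positivity
  set Ap : Set ℝ := {x ∈ A | ξ / 2 ≤ x} with hAp
  set Am : Set ℝ := {x ∈ A | x < ξ / 2} with hAm
  have hmemA : ∀ x ∈ A, (∃ n : ℤ, x = (n : ℝ) / lam) ∧
      M ≤ |x ^ 2 - (ξ - x) ^ 2| ∧ |τ - x ^ 3 - (ξ - x) ^ 3| ≤ 1 := by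
    intro x hx; rw [hA] at hx; exact hx
  have hdiamp : ∀ x ∈ Ap, ∀ y ∈ Ap, |x - y| ≤ 1 / M := by
    intro x hx y hy
    obtain ⟨hxA, hxs⟩ := hx
    obtain ⟨hyA, hys⟩ := hy
    obtain ⟨_, hx1, hx2⟩ := hmemA x hxA
    obtain ⟨_, hy1, hy2⟩ := hmemA y hyA
    exact diam_aux ξ τ M x y hM0 hξ hx1 hx2 hy1 hy2 hxs hys
  have hdiamm : ∀ x ∈ Am, ∀ y ∈ Am, |x - y| ≤ 1 / M := by
    intro x hx y hy
    obtain ⟨hxA, hxs⟩ := hx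
    obtain ⟨hyA, hys⟩ := hy
    obtain ⟨_, hx1, hx2⟩ := hmemA x hxA
    obtain ⟨_, hy1, hy2⟩ := hmemA y hyA
    have ex1 : (ξ - x) ^ 2 - (ξ - (ξ - x)) ^ 2 = -(x ^ 2 - (ξ - x) ^ 2) := by ring
    have ex2 : τ - (ξ - x) ^ 3 - (ξ - (ξ - x)) ^ 3 = τ - x ^ 3 - (ξ - x) ^ 3 := by ring
    have ey1 : (ξ - y) ^ 2 - (ξ - (ξ - y)) ^ 2 = -(y ^ 2 - (ξ - y) ^ 2) := by ring
    have ey2 : τ - (ξ - y) ^ 3 - (ξ - (ξ - y)) ^ 3 = τ - y ^ 3 - (ξ - y) ^ 3 := by ring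
    have := diam_aux ξ τ M (ξ - x) (ξ - y) hM0 hξ
      (by rw [ex1, abs_neg]; exact hx1) (by rw [ex2]; exact hx2)
      (by rw [ey1, abs_neg]; exact hy1) (by rw [ey2]; exact hy2)
      (by linarith) (by linarith)
    have e : |ξ - x - (ξ - y)| = |x - y| := by rw [abs_sub_comm]; ring_nf
    rw [e] at this
    exact this
  obtain ⟨a, ha⟩ := interval_of_diam Ap (1 / M) hℓ hdiamp
  obtain ⟨b, hb⟩ := interval_of_diam Am (1 / M) hℓ hdiamm
  have hsplit : A = Ap ∪ Am := by
    apply Set.Subset.antisymm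
    · intro x hx
      rcases le_or_gt (ξ / 2) x with h | h
      · exact Or.inl ⟨hx, h⟩
      · exact Or.inr ⟨hx, h⟩
    · rintro x (⟨hx, _⟩ | ⟨hx, _⟩) <;> exact hx
  have h12 : (1:ℝ) / M ≤ 2 / M := by
    gcongr
    norm_num
  have hincl : ∀ c : ℝ, Set.Icc c (c + 1 / M) ⊆ Set.Icc c (c + 2 / M) :=
    fun c => Set.Icc_subset_Icc le_rfl (by linarith)
  have hlatp : ∀ x ∈ Ap, ∃ n : ℤ, x = (n : ℝ) / lam := fun x hx => (hmemA x hx.1).1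
  have hlatm : ∀ x ∈ Am, ∃ n : ℤ, x = (n : ℝ) / lam := fun x hx => (hmemA x hx.1).1
  obtain ⟨hfinp, hcardp⟩ := count_lemma lam a (1 / M) hlam0 hℓ Ap hlatp ha
  obtain ⟨hfinm, hcardm⟩ := count_lemma lam b (1 / M) hlam0 hℓ Am hlatm hb
  refine ⟨⟨a, b, ?_⟩, ?_, ?_⟩
  · rw [hsplit]
    exact Set.union_subset_union (ha.trans (hincl a)) (hb.trans (hincl b))
  · rw [hsplit]; exact hfinp.union hfinm
  · rw [hsplit]
    have hle : (Ap ∪ Am).ncard ≤ Ap.ncard + Am.ncard := Set.ncard_union_le _ _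
    have hle' : ((Ap ∪ Am).ncard : ℝ) ≤ (Ap.ncard : ℝ) + (Am.ncard : ℝ) := by
      exact_mod_cast hle
    have e1 : lam * (1 / M) = lam / M := by ring
    rw [e1] at hcardp hcardm
    linarith
end

section
/- Let k ≥ 3 and ξ₁,…,ξ_{k+2} ∈ ℝ with ξ₁ + ⋯ + ξ_{k+2} = 0, ordered |ξ₁| ≥ ⋯ ≥ |ξ_{k+2}|. Suppose |ξ₁|²|ξ₁+ξ₂| ≥ K|ξ₁||ξ₃|² and |ξ₁| ≥ K|ξ₃| for a sufficiently large constant K (the set Ω₃). Then |ξ₁³ + ξ₂³ + ⋯ + ξ_{k+2}³| ≥ c|ξ₁³ + ξ₂³| ≥ c'ξ₁²|ξ₁+ξ₂| for constants c, c' > 0 depending only on k and K. -/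
open Finset in
/-- Lower bound on the resonance function in the region Ω₃: if
`|ξ₁|²|ξ₁+ξ₂| ≥ K|ξ₁||ξ₃|²` and `|ξ₁| ≥ K|ξ₃|` for `K` sufficiently large, then
`|ξ₁³+⋯+ξ_{k+2}³| ≥ c|ξ₁³+ξ₂³| ≥ c'ξ₁²|ξ₁+ξ₂|`. -/
theorem stmt10 (k : ℕ) (hk : 3 ≤ k) :
    ∃ K₀ : ℝ, 0 < K₀ ∧
      ∀ K : ℝ, K₀ ≤ K →
        ∃ c c' : ℝ, 0 < c ∧ 0 < c' ∧
          ∀ ξ : Fin (k + 2) → ℝ,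
            (∑ j, ξ j) = 0 →
            (∀ i j : Fin (k + 2), i ≤ j → |ξ j| ≤ |ξ i|) →
            K * (|ξ 0| * |ξ 2| ^ 2) ≤ |ξ 0| ^ 2 * |ξ 0 + ξ 1| →
            K * |ξ 2| ≤ |ξ 0| →
            c * |(ξ 0) ^ 3 + (ξ 1) ^ 3| ≤ |∑ j, (ξ j) ^ 3| ∧
              c' * ((ξ 0) ^ 2 * |ξ 0 + ξ 1|) ≤ |(ξ 0) ^ 3 + (ξ 1) ^ 3| := by
  have hk' : (3:ℝ) ≤ (k:ℝ) := by exact_mod_cast hk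
  refine ⟨(k:ℝ), by linarith, fun K hK => ⟨1/2, 3/4, by norm_num, by norm_num,
    fun ξ hsum hord h1 h2 => ?_⟩⟩
  have hKpos : (0:ℝ) < K := by linarith
  set a := ξ 0 with ha
  set b := ξ 1 with hb
  -- key: |a³+b³| ≥ (3/4) a² |a+b|
  have hnn : 0 ≤ a^2 - a*b + b^2 := by nlinarith [sq_nonneg (a-b), sq_nonneg (a+b)]
  have habs : |a^3 + b^3| = |a+b| * (a^2 - a*b + b^2) := by
    rw [show a^3 + b^3 = (a+b)*(a^2-a*b+b^2) by ring, abs_mul, abs_of_nonneg hnn]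
  have hA : 3/4 * (a^2 * |a+b|) ≤ |a^3 + b^3| := by
    rw [habs]
    nlinarith [abs_nonneg (a+b), mul_nonneg (abs_nonneg (a+b)) (sq_nonneg (2*b-a))]
  refine ⟨?_, hA⟩
  -- split off the tail
  set T := ∑ j : Fin k, (ξ j.succ.succ)^3 with hT
  have hsplit : ∑ j, (ξ j)^3 = a^3 + b^3 + T := by
    rw [Fin.sum_univ_succ, Fin.sum_univ_succ]
    simp only [Fin.succ_zero_eq_one, ← ha, ← hb, hT]
    ring
  -- tail terms are small
  have hval2 : ((2 : Fin (k+2)) : ℕ) = 2 := by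
    obtain ⟨m, rfl⟩ : ∃ m, k = m + 3 := ⟨k - 3, by omega⟩
    exact Fin.val_two
  have hEle : ∀ j : Fin k, |ξ j.succ.succ| ≤ |ξ 2| := by
    intro j
    apply hord
    rw [Fin.le_def, hval2]
    simp [Fin.val_succ]
  have hTb : |T| ≤ (k:ℝ) * |ξ 2|^3 := by
    calc |T| ≤ ∑ j : Fin k, |(ξ j.succ.succ)^3| := Finset.abs_sum_le_sum_abs _ _
      _ ≤ ∑ _j : Fin k, |ξ 2|^3 := by
          refine Finset.sum_le_sum fun j _ => ?_
          rw [abs_pow]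
          exact pow_le_pow_left₀ (abs_nonneg _) (hEle j) 3
      _ = (k:ℝ) * |ξ 2|^3 := by
          rw [Finset.sum_const, Finset.card_univ, Fintype.card_fin, nsmul_eq_mul]
  -- |ξ2|³ ≤ a²|a+b|/K²
  have hsq : |a|^2 = a^2 := sq_abs a
  have h3 : K^2 * |ξ 2|^3 ≤ a^2 * |a+b| := by
    have e1 : K * |ξ 2| * |ξ 2|^2 ≤ |a| * |ξ 2|^2 :=
      mul_le_mul_of_nonneg_right h2 (by positivity)
    have e2 := mul_le_mul_of_nonneg_left e1 hKpos.le
    have e3 : K * (|a| * |ξ 2|^2) ≤ a^2 * |a+b| := by rw [← hsq]; exact h1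
    nlinarith [e2, e3]
  -- combine
  have hEnn : (0:ℝ) ≤ |ξ 2|^3 := by positivity
  have hk2 : (k:ℝ)^2 * |ξ 2|^3 ≤ a^2 * |a+b| := by
    nlinarith [mul_nonneg (mul_nonneg (sub_nonneg.2 hK) (by linarith : (0:ℝ) ≤ K + k)) hEnn]
  have hkE : 3 * ((k:ℝ) * |ξ 2|^3) ≤ a^2 * |a+b| := by
    nlinarith [mul_nonneg (mul_nonneg (by linarith : (0:ℝ) ≤ (k:ℝ)) (by linarith : (0:ℝ) ≤ (k:ℝ) - 3)) hEnn]
  have hlow := abs_add_le (a^3 + b^3 + T) (-T)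
  rw [show a^3 + b^3 + T + -T = a^3 + b^3 by ring, abs_neg] at hlow
  rw [hsplit]
  have hAnn : (0:ℝ) ≤ |a^3+b^3| := abs_nonneg _
  linarith
end
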